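/- arXiv:1609.06391 — 3 statements merged into one kernel-verified Lean document; each statement's English description precedes it below -/
import Mathlib

section
/- Let p₁ = [0:1], p₂ = [1:1], p₃ = [2:1], p₄ = [3:1], p₅ = [6:1] in ℙ¹(ℚ). Suppose g₁, g₂, g₃ ∈ PGL₂(ℚ) satisfy: g₁ exchanges p₁ with p₂ and exchanges p₃ with p₄ (i.e., g₁(p₁) = p₂, g₁(p₂) = p₁, g₁(p₃) = p₄, g₁(p₄) = p₃); g₂ exchanges p₁ with p₃ and exchanges p₄ with p₅; and g₃ exchanges p₁ with p₃ and exchanges p₂ with p₅. Then the composition g₁ ∘ g₂ ∘ g₃ equals σ, the class in PGL₂(ℚ) of the matrix with rows (1,1) and (0,1), i.e., the Möbius transformation z ↦ z + 1. -/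
open Matrix

noncomputable section

/-- The projective line `ℙ¹(K)` over a field `K`, as the projectivization of `K²`. -/
abbrev P1 (K : Type*) [Field K] : Type _ := Projectivization K (Fin 2 → K)

/-- `PGL₂(K)`: the quotient of `GL₂(K)` by its center. -/
abbrev PGL2 (K : Type*) [Field K] : Type _ :=
  GL (Fin 2) K ⧸ Subgroup.center (GL (Fin 2) K)

namespace PGL2

variable {K : Type*} [Field K]

/-- The linear automorphism of `K²` attached to an element of `GL₂(K)`. -/
def glEquiv (g : GL (Fin 2) K) : (Fin 2 → K) ≃ₗ[K] (Fin 2 → K) :=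
  (Matrix.GeneralLinearGroup.toLin g).toLinearEquiv

lemma glEquiv_apply (g : GL (Fin 2) K) (v : Fin 2 → K) :
    glEquiv g v = (g : Matrix (Fin 2) (Fin 2) K).mulVec v := rfl

/-- `GL₂(K)` acts on `ℙ¹(K)` by Möbius transformations. -/
instance : SMul (GL (Fin 2) K) (P1 K) :=
  ⟨fun g => Projectivization.map (glEquiv g).toLinearMap (glEquiv g).injective⟩

lemma gl_smul_mk (g : GL (Fin 2) K) (v : Fin 2 → K) (hv : v ≠ 0) :
    g • Projectivization.mk K v hv
      = Projectivization.mk K ((g : Matrix (Fin 2) (Fin 2) K).mulVec v)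
          (by intro h; exact hv ((glEquiv g).injective (by rw [map_zero]; exact h))) :=
  Projectivization.map_mk (glEquiv g).toLinearMap (glEquiv g).injective v hv

instance : MulAction (GL (Fin 2) K) (P1 K) where
  one_smul x := by
    induction x using Projectivization.ind with
    | h v hv => rw [gl_smul_mk]; simp
  mul_smul g h x := by
    induction x using Projectivization.ind with
    | h v hv => rw [gl_smul_mk, gl_smul_mk, gl_smul_mk]; simp only [Units.val_mul, Matrix.mulVec_mulVec]

lemma exists_scalar_of_mem_center (g : GL (Fin 2) K)
    (hg : g ∈ Subgroup.center (GL (Fin 2) K)) :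
    ∃ a : K, (g : Matrix (Fin 2) (Fin 2) K) = a • (1 : Matrix (Fin 2) (Fin 2) K) := by
  have hmem := Subgroup.mem_center_iff.mp hg
  set A : Matrix (Fin 2) (Fin 2) K := (g : Matrix (Fin 2) (Fin 2) K) with hA
  have hUdet : ((!![1, 1; 0, 1] : Matrix (Fin 2) (Fin 2) K)).det ≠ 0 := by
    norm_num [Matrix.det_fin_two_of]
  have hLdet : ((!![1, 0; 1, 1] : Matrix (Fin 2) (Fin 2) K)).det ≠ 0 := by
    norm_num [Matrix.det_fin_two_of]
  have hU := congrArg Units.val (hmem (Matrix.GeneralLinearGroup.mkOfDetNeZero _ hUdet))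
  have hL := congrArg Units.val (hmem (Matrix.GeneralLinearGroup.mkOfDetNeZero _ hLdet))
  have hU' : (!![1, 1; 0, 1] : Matrix (Fin 2) (Fin 2) K) * A = A * !![1, 1; 0, 1] := hU
  have hL' : (!![1, 0; 1, 1] : Matrix (Fin 2) (Fin 2) K) * A = A * !![1, 0; 1, 1] := hL
  have e1 := congrFun (congrFun hU' 0) 0
  have e2 := congrFun (congrFun hU' 0) 1
  have e3 := congrFun (congrFun hL' 0) 0
  simp [Matrix.mul_apply, Fin.sum_univ_two] at e1 e2 e3
  refine ⟨A 0 0, ?_⟩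
  ext i j
  fin_cases i <;> fin_cases j <;>
    simp [Matrix.one_apply] <;> first | exact e3 | exact e1 | linear_combination e2



lemma center_smul_eq (g : GL (Fin 2) K) (hg : g ∈ Subgroup.center (GL (Fin 2) K))
    (x : P1 K) : g • x = x := by
  obtain ⟨a, hA⟩ := exists_scalar_of_mem_center g hg
  have ha : a ≠ 0 := by
    intro h
    subst h
    have : IsUnit (g : Matrix (Fin 2) (Fin 2) K).det := ⟨Matrix.GeneralLinearGroup.det g, rfl⟩
    rw [hA] at this
    simp at this
  induction x using Projectivization.ind with
  | h v hv =>
    rw [gl_smul_mk]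
    rw [Projectivization.mk_eq_mk_iff]
    exact ⟨Units.mk0 a ha, by ext i; fin_cases i <;> simp [hA, Matrix.mulVec, dotProduct, Fin.sum_univ_two, Matrix.one_apply]⟩

/-- `PGL₂(K)` acts on `ℙ¹(K)` by Möbius transformations. -/
def toPerm : PGL2 K →* Equiv.Perm (P1 K) :=
  QuotientGroup.lift _ (MulAction.toPermHom (GL (Fin 2) K) (P1 K))
    (fun g hg => Equiv.ext fun x => center_smul_eq g hg x)

instance : SMul (PGL2 K) (P1 K) := ⟨fun g x => toPerm g x⟩

lemma smul_def (g : PGL2 K) (x : P1 K) : g • x = toPerm g x := rfl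

instance : MulAction (PGL2 K) (P1 K) where
  one_smul x := by simp [smul_def]
  mul_smul g h x := by simp [smul_def]

/-- The class in `PGL₂(K)` of a matrix with nonzero determinant. -/
def cls (M : Matrix (Fin 2) (Fin 2) K) (h : M.det ≠ 0) : PGL2 K :=
  QuotientGroup.mk (Matrix.GeneralLinearGroup.mkOfDetNeZero M h)

lemma cls_smul_mk (M : Matrix (Fin 2) (Fin 2) K) (h : M.det ≠ 0) (v : Fin 2 → K)
    (hv : v ≠ 0) (hMv : M.mulVec v ≠ 0) :
    cls M h • Projectivization.mk K v hv = Projectivization.mk K (M.mulVec v) hMv := by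
  rw [smul_def, cls]
  show (Matrix.GeneralLinearGroup.mkOfDetNeZero M h) • Projectivization.mk K v hv = _
  rw [gl_smul_mk]
  rfl

lemma vec_ne_zero (a : K) : ![a, (1 : K)] ≠ 0 := fun h => by simpa using congrFun h 1

/-- The affine point `[z : 1]` of `ℙ¹(K)`. -/
def affPt (z : K) : P1 K := Projectivization.mk K ![z, 1] (vec_ne_zero z)

/-- The point `[a : b]` of `ℙ¹(K)`. -/
def pt (a b : K) (h : ![a, b] ≠ 0) : P1 K := Projectivization.mk K ![a, b] h

end PGL2


/-!
Following `0`, `1`, `2` through `g₃`, `g₂`, `g₁` shows that `g₁ g₂ g₃` sends `0 ↦ 1`, `1 ↦ 2`,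
`2 ↦ 3`, exactly as `σ` does, and an element of `PGL₂` is determined by the images of three
distinct points: if a matrix `A` fixes `[z : 1]`, then `z` is a root of the quadratic
`A₁₀ z² + (A₁₁ - A₀₀) z - A₀₁`, and three distinct roots force it to vanish, i.e. `A` to be scalar.
-/

lemma quadratic_coeffs_eq_zero_of_three_roots {K : Type*} [Field K] {p q r a b c : K}
    (hab : a ≠ b) (hac : a ≠ c) (hbc : b ≠ c)
    (ha : p * a ^ 2 + q * a + r = 0) (hb : p * b ^ 2 + q * b + r = 0)
    (hc : p * c ^ 2 + q * c + r = 0) : p = 0 ∧ q = 0 ∧ r = 0 := by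
  have hab' : p * (a + b) + q = 0 :=
    mul_left_cancel₀ (sub_ne_zero.2 hab) (by linear_combination ha - hb)
  have hac' : p * (a + c) + q = 0 :=
    mul_left_cancel₀ (sub_ne_zero.2 hac) (by linear_combination ha - hc)
  have hp : p = 0 := mul_left_cancel₀ (sub_ne_zero.2 hbc) (by linear_combination hab' - hac')
  have hq : q = 0 := by linear_combination hab' - (a + b) * hp
  exact ⟨hp, hq, by linear_combination ha - a ^ 2 * hp - a * hq⟩

namespace PGL2

variable {K : Type*} [Field K]

lemma fixed_point_quadratic_eq_zero {G : GL (Fin 2) K} {z : K} (h : G • affPt z = affPt z) :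
    G.1 1 0 * z ^ 2 + (G.1 1 1 - G.1 0 0) * z - G.1 0 1 = 0 := by
  rw [affPt, gl_smul_mk, Projectivization.mk_eq_mk_iff'] at h
  obtain ⟨t, ht⟩ := h
  have h₀ := congrFun ht 0
  have h₁ := congrFun ht 1
  simp only [Pi.smul_apply, mulVec, dotProduct, Fin.sum_univ_two, smul_eq_mul,
    Matrix.cons_val_zero, Matrix.cons_val_one, mul_one] at h₀ h₁
  linear_combination h₀ - z * h₁

lemma eq_one_of_smul_affPt_eq_self {a b c : K} (hab : a ≠ b) (hac : a ≠ c) (hbc : b ≠ c)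
    (g : PGL2 K) (ha : g • affPt a = affPt a) (hb : g • affPt b = affPt b)
    (hc : g • affPt c = affPt c) : g = 1 := by
  obtain ⟨G, rfl⟩ := QuotientGroup.mk_surjective g
  set A := (G : Matrix (Fin 2) (Fin 2) K)
  obtain ⟨h₁₀, h_diag, h₀₁⟩ := quadratic_coeffs_eq_zero_of_three_roots
    (p := A 1 0) (q := A 1 1 - A 0 0) (r := -A 0 1) hab hac hbc
    (by linear_combination fixed_point_quadratic_eq_zero ha)
    (by linear_combination fixed_point_quadratic_eq_zero hb)
    (by linear_combination fixed_point_quadratic_eq_zero hc)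
  have hA : A = scalar (Fin 2) (A 0 0) := by
    ext i j
    fin_cases i <;> fin_cases j <;> simp [A, h₁₀, neg_eq_zero.mp h₀₁, sub_eq_zero.mp h_diag]
  rw [QuotientGroup.eq_one_iff, GeneralLinearGroup.mem_center_iff_val_mem_range_scalar]
  exact ⟨A 0 0, hA.symm⟩

lemma eq_of_smul_affPt_eq {a b c : K} (hab : a ≠ b) (hac : a ≠ c) (hbc : b ≠ c)
    {g h : PGL2 K} (ha : g • affPt a = h • affPt a) (hb : g • affPt b = h • affPt b)
    (hc : g • affPt c = h • affPt c) : g = h := by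
  have fixes {x : P1 K} (hx : g • x = h • x) : (h⁻¹ * g) • x = x := by
    rw [mul_smul, inv_smul_eq_iff, hx]
  exact (inv_mul_eq_one.mp <|
    eq_one_of_smul_affPt_eq_self hab hac hbc _ (fixes ha) (fixes hb) (fixes hc)).symm

lemma cls_translation_smul_affPt (h : (!![(1 : K), 1; 0, 1]).det ≠ 0) (z : K) :
    cls !![(1 : K), 1; 0, 1] h • affPt z = affPt (z + 1) := by
  have hv : (!![(1 : K), 1; 0, 1]).mulVec ![z, 1] = ![z + 1, 1] := by
    ext i
    fin_cases i <;> simp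
  simp only [affPt, cls_smul_mk _ h _ _ (hv ▸ vec_ne_zero _), hv]

end PGL2

open PGL2 in
/-- With `p₁ = 0`, `p₂ = 1`, `p₃ = 2`, `p₄ = 3`, `p₅ = 6` on `ℙ¹(ℚ)`, if `g₁` exchanges
`p₁ ↔ p₂` and `p₃ ↔ p₄`, `g₂` exchanges `p₁ ↔ p₃` and `p₄ ↔ p₅`, and `g₃` exchanges
`p₁ ↔ p₃` and `p₂ ↔ p₅`, then `g₁ g₂ g₃` is the Möbius transformation `z ↦ z + 1`. -/
theorem composition_of_involutions_eq_sigma (g₁ g₂ g₃ : PGL2 ℚ)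
    (h₁a : g₁ • affPt (0 : ℚ) = affPt 1)
    (h₁c : g₁ • affPt (2 : ℚ) = affPt 3) (h₁d : g₁ • affPt (3 : ℚ) = affPt 2)
    (h₂a : g₂ • affPt (0 : ℚ) = affPt 2) (h₂b : g₂ • affPt (2 : ℚ) = affPt 0)
    (h₂d : g₂ • affPt (6 : ℚ) = affPt 3)
    (h₃a : g₃ • affPt (0 : ℚ) = affPt 2) (h₃b : g₃ • affPt (2 : ℚ) = affPt 0)
    (h₃c : g₃ • affPt (1 : ℚ) = affPt 6) :
    g₁ * g₂ * g₃ = cls !![(1 : ℚ), 1; 0, 1] (by norm_num [Matrix.det_fin_two_of]) := by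
  refine eq_of_smul_affPt_eq (a := 0) (b := 1) (c := 2) (by norm_num) (by norm_num) (by norm_num)
    ?_ ?_ ?_ <;> rw [cls_translation_smul_affPt, mul_smul, mul_smul]
  · rw [h₃a, h₂b, h₁a]; norm_num
  · rw [h₃c, h₂d, h₁d]; norm_num
  · rw [h₃b, h₂a, h₁c]; norm_num
end
end

section
/- Let G be a group, let H ⊆ H' be subgroups of G, let s ∈ H with s² = 1 and s ≠ 1, and let t ∈ G. Assume: (i) conjugation by t preserves H, i.e., t·H·t⁻¹ = H; (ii) tⁿ ∈ H' for every integer n; (iii) every u ∈ H' commuting with s satisfies u = 1 or u = s; (iv) for every nonzero integer n, tⁿ ∉ H and tⁿ·s ∉ H. Then for all integers m ≠ n, the involutions t⁻ᵐ·s·tᵐ and t⁻ⁿ·s·tⁿ both lie in H but are not conjugate by any element of H (there is no α ∈ H with α·(t⁻ᵐ s tᵐ)·α⁻¹ = t⁻ⁿ s tⁿ). In particular, H contains infinitely many pairwise non-conjugate involutions, hence infinitely many conjugacy classes of involutions. -/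
/-!
If `α ∈ H` conjugates `t⁻ᵐ s tᵐ` to `t⁻ⁿ s tⁿ`, then `u = tⁿ α t⁻ᵐ ∈ H'` commutes with `s`,
so `u = 1` or `u = s`. Since `t` normalizes `H`, both cases force `tᵐ⁻ⁿ ∈ H`: either
`α = tᵐ⁻ⁿ`, or `α = (t⁻ⁿ s tⁿ) tᵐ⁻ⁿ` with `t⁻ⁿ s tⁿ ∈ H`.
-/

namespace Subgroup

variable {G : Type*} [Group G]

theorem zpow_neg_mul_mul_zpow_mem {H : Subgroup G} {s t : G}
    (ht : t ∈ normalizer (H : Set G)) (hs : s ∈ H) (m : ℤ) : t ^ (-m) * s * t ^ m ∈ H := by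
  rw [zpow_neg]
  exact (mem_normalizer_iff''.mp ((normalizer (H : Set G)).zpow_mem ht m) s).mp hs

end Subgroup

theorem commute_mul_mul_inv_of_conj_eq {G : Type*} [Group G] {a b α s : G}
    (h : α * (a⁻¹ * s * a) * α⁻¹ = b⁻¹ * s * b) : Commute (b * α * a⁻¹) s :=
  calc b * α * a⁻¹ * s = b * (α * (a⁻¹ * s * a) * α⁻¹) * α * a⁻¹ := by group
    _ = s * (b * α * a⁻¹) := by rw [h]; group

theorem zpow_sub_mem_of_conj_eq {G : Type*} [Group G] {H H' : Subgroup G} (hHH' : H ≤ H')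
    {s t α : G} (hsH : s ∈ H) (ht : t ∈ Subgroup.normalizer (H : Set G)) (htH' : t ∈ H')
    (hcent : ∀ u : G, u ∈ H' → u * s = s * u → u = 1 ∨ u = s) {m n : ℤ} (hα : α ∈ H)
    (h : α * (t ^ (-m) * s * t ^ m) * α⁻¹ = t ^ (-n) * s * t ^ n) : t ^ (m - n) ∈ H := by
  rw [zpow_neg, zpow_neg] at h
  set u := t ^ n * α * (t ^ m)⁻¹
  have huH' : u ∈ H' :=
    H'.mul_mem (H'.mul_mem (H'.zpow_mem htH' n) (hHH' hα)) (H'.inv_mem (H'.zpow_mem htH' m))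
  have hα_eq : α = t ^ (-n) * u * t ^ m := by simp only [u]; group
  rcases hcent u huH' (commute_mul_mul_inv_of_conj_eq h) with hu | hu
  · rwa [hα_eq, hu, mul_one, ← zpow_add, neg_add_eq_sub] at hα
  · have hconj : t ^ (-n) * s * t ^ n ∈ H := Subgroup.zpow_neg_mul_mul_zpow_mem ht hsH n
    have hsplit : t ^ (m - n) = (t ^ (-n) * s * t ^ n)⁻¹ * α := by rw [hα_eq, hu]; group
    rw [hsplit]
    exact H.mul_mem (H.inv_mem hconj) hα

theorem nonconjugate_involutions_general {G : Type*} [Group G] (H H' : Subgroup G)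
    (hHH' : H ≤ H') (s : G) (t : G)
    (hconj : ∀ h : G, h ∈ H → t * h * t⁻¹ ∈ H)
    (hconj' : ∀ h : G, t * h * t⁻¹ ∈ H → h ∈ H)
    (ht : ∀ n : ℤ, t ^ n ∈ H')
    (hcent : ∀ u : G, u ∈ H' → u * s = s * u → u = 1 ∨ u = s)
    (hne : ∀ n : ℤ, n ≠ 0 → t ^ n ∉ H ∧ t ^ n * s ∉ H)
    (hsH : s ∈ H) :
    ∀ m n : ℤ, m ≠ n →
      t ^ (-m) * s * t ^ m ∈ H ∧ t ^ (-n) * s * t ^ n ∈ H ∧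
      ¬ ∃ α ∈ H, α * (t ^ (-m) * s * t ^ m) * α⁻¹ = t ^ (-n) * s * t ^ n := by
  have htN : t ∈ Subgroup.normalizer (H : Set G) :=
    Subgroup.mem_normalizer_iff.mpr fun h => ⟨hconj h, hconj' h⟩
  have htH' : t ∈ H' := by simpa using ht 1
  intro m n hmn
  refine ⟨Subgroup.zpow_neg_mul_mul_zpow_mem htN hsH m,
    Subgroup.zpow_neg_mul_mul_zpow_mem htN hsH n, ?_⟩
  rintro ⟨α, hα, h⟩
  exact (hne (m - n) (sub_ne_zero.mpr hmn)).1
    (zpow_sub_mem_of_conj_eq hHH' hsH htN htH' hcent hα h)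

/-- Group-theoretic core of the existence of infinitely many conjugacy classes of
involutions: under hypotheses (i)-(iv), the involutions `t⁻ᵐ s tᵐ` (for `m : ℤ`) all lie
in `H` and are pairwise non-conjugate in `H`. -/
theorem nonconjugate_involutions {G : Type*} [Group G] (H H' : Subgroup G)
    (hHH' : H ≤ H') (s : G) (hs2 : s ^ 2 = 1) (hs1 : s ≠ 1) (t : G)
    (hconj : ∀ h : G, h ∈ H → t * h * t⁻¹ ∈ H)
    (hconj' : ∀ h : G, t * h * t⁻¹ ∈ H → h ∈ H)
    (ht : ∀ n : ℤ, t ^ n ∈ H')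
    (hcent : ∀ u : G, u ∈ H' → u * s = s * u → u = 1 ∨ u = s)
    (hne : ∀ n : ℤ, n ≠ 0 → t ^ n ∉ H ∧ t ^ n * s ∉ H)
    (hsH : s ∈ H) :
    ∀ m n : ℤ, m ≠ n →
      t ^ (-m) * s * t ^ m ∈ H ∧ t ^ (-n) * s * t ^ n ∈ H ∧
      ¬ ∃ α ∈ H, α * (t ^ (-m) * s * t ^ m) * α⁻¹ = t ^ (-n) * s * t ^ n :=
  nonconjugate_involutions_general H H' hHH' s t hconj hconj' ht hcent hne hsH
end

section
/- Equip ℝ¹⁶, with coordinates indexed 0,…,15, with the bilinear form ⟨x, y⟩ = x₀y₀ − Σ_{i=1}^{15} xᵢyᵢ. Let v = (1, 0, 0, 0, 0, −1, 0, 0, 0, 0, 0, 0, 0, 0, 0, 0), and let R₁,…,R₆ be the six vectors given by the rows of the matrix: R₁ = (5, −1, 0, 0, −1, −3, −1, −1, −2, 0, −2, −1, −1, −1, −1, 0); R₂ = (5, 0, −1, −1, 0, −3, −1, −1, −2, −1, −2, −1, 0, −1, 0, −1); R₃ = (4, −1, 0, 0, −1, −2, −1, −1, 0, −1, −2, −1,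 0, −1, 0, −1); R₄ = (4, 0, −1, −1, 0, −2, −1, −1, −2, 0, 0, −1, −1, −1, −1, 0); R₅ = (3, −1, 0, 0, −1, −1, −1, −1, 0, 0, 0, −1, −1, −1, −1, 0); R₆ = (3, 0, −1, −1, 0, −1, −1, −1, 0, −1, 0, −1, 0, −1, 0, −1). Then ⟨v, v⟩ = 0, ⟨v, Rᵢ⟩ = 2 for every i, and ⟨Rᵢ, Rⱼ⟩ ≥ 0 for all i, j. Consequently, for every a₁,…,a₆ ≥ 0 in ℝ, the vector w = v + Σᵢ aᵢRᵢ satisfies ⟨w, w⟩ = 0 if and only if a₁ = ⋯ = a₆ = 0; that is, v is the unique point of the polyhedron v + Σᵢ ℝ_{≥0}·Rᵢ with self-intersection zero. -/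
open Finset

/-- The hyperbolic-type bilinear form `⟨x, y⟩ = x₀y₀ − Σ_{i=1}^{15} xᵢyᵢ` on `ℝ¹⁶`,
modelling the intersection form on the Néron–Severi lattice of the blow-up of `ℙ²`
at the 15 intersection points of six lines. -/
def ip (x y : Fin 16 → ℝ) : ℝ :=
  x 0 * y 0 - ∑ i : Fin 15, x i.succ * y i.succ

/-- The class `v = H − E₀₅`. -/
def vcl : Fin 16 → ℝ :=
  ![1, 0, 0, 0, 0, -1, 0, 0, 0, 0, 0, 0, 0, 0, 0, 0]

/-- The six rays `R₁, …, R₆`. -/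
def Rray : Fin 6 → Fin 16 → ℝ :=
  ![![5, -1, 0, 0, -1, -3, -1, -1, -2, 0, -2, -1, -1, -1, -1, 0],
    ![5, 0, -1, -1, 0, -3, -1, -1, -2, -1, -2, -1, 0, -1, 0, -1],
    ![4, -1, 0, 0, -1, -2, -1, -1, 0, -1, -2, -1, 0, -1, 0, -1],
    ![4, 0, -1, -1, 0, -2, -1, -1, -2, 0, 0, -1, -1, -1, -1, 0],
    ![3, -1, 0, 0, -1, -1, -1, -1, 0, 0, 0, -1, -1, -1, -1, 0],
    ![3, 0, -1, -1, 0, -1, -1, -1, 0, -1, 0, -1, 0, -1, 0, -1]]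

lemma ip_comm (x y : Fin 16 → ℝ) : ip x y = ip y x := by
  simp [ip, mul_comm]

lemma ip_add_right (x y z : Fin 16 → ℝ) : ip x (y + z) = ip x y + ip x z := by
  simp [ip, mul_add, Finset.sum_add_distrib]; ring

lemma ip_add_left (x y z : Fin 16 → ℝ) : ip (x + y) z = ip x z + ip y z := by
  rw [ip_comm, ip_add_right, ip_comm z x, ip_comm z y]

lemma ip_smul_right (c : ℝ) (x y : Fin 16 → ℝ) : ip x (c • y) = c * ip x y := by
  simp only [ip, Pi.smul_apply, smul_eq_mul, mul_sub, Finset.mul_sum]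
  congr 1
  · ring
  · exact Finset.sum_congr rfl fun i _ => by ring

lemma ip_smul_left (c : ℝ) (x y : Fin 16 → ℝ) : ip (c • x) y = c * ip x y := by
  rw [ip_comm, ip_smul_right, ip_comm]

lemma ip_sum_right (x : Fin 16 → ℝ) {α : Type*} (s : Finset α) (f : α → Fin 16 → ℝ) :
    ip x (∑ i ∈ s, f i) = ∑ i ∈ s, ip x (f i) := by
  induction s using Finset.cons_induction with
  | empty => simp [ip]
  | cons a s ha ih => simp [Finset.sum_cons, ip_add_right, ih]

lemma ip_sum_left (y : Fin 16 → ℝ) {α : Type*} (s : Finset α) (f : α → Fin 16 → ℝ) :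
    ip (∑ i ∈ s, f i) y = ∑ i ∈ s, ip (f i) y := by
  rw [ip_comm, ip_sum_right]
  exact Finset.sum_congr rfl fun i _ => ip_comm y (f i)

/-- `⟨v,v⟩ = 0`, `⟨v,Rᵢ⟩ = 2`, `⟨Rᵢ,Rⱼ⟩ ≥ 0`; consequently `v` is the unique point of
the polyhedron `v + Σᵢ ℝ₊ Rᵢ` with self-intersection zero. -/
theorem unique_selfintersection_zero_vertex :
    ip vcl vcl = 0 ∧
      (∀ i : Fin 6, ip vcl (Rray i) = 2) ∧
      (∀ i j : Fin 6, 0 ≤ ip (Rray i) (Rray j)) ∧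
      (∀ a : Fin 6 → ℝ, (∀ i, 0 ≤ a i) →
        (ip (vcl + ∑ i : Fin 6, a i • Rray i) (vcl + ∑ i : Fin 6, a i • Rray i) = 0 ↔
          ∀ i, a i = 0)) := by
  have hvv : ip vcl vcl = 0 := by norm_num [ip, vcl, Fin.sum_univ_succ]
  have hvR : ∀ i : Fin 6, ip vcl (Rray i) = 2 := by
    intro i; fin_cases i <;> norm_num [ip, vcl, Rray, Fin.sum_univ_succ]
  have hRR : ∀ i j : Fin 6, 0 ≤ ip (Rray i) (Rray j) := by
    intro i j
    fin_cases i <;> fin_cases j <;> norm_num [ip, Rray, Fin.sum_univ_succ]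
  refine ⟨hvv, hvR, hRR, ?_⟩
  intro a ha
  have hvs : ip vcl (∑ i : Fin 6, a i • Rray i) = 2 * ∑ i : Fin 6, a i := by
    rw [ip_sum_right, Finset.mul_sum]
    exact Finset.sum_congr rfl fun i _ => by rw [ip_smul_right, hvR i]; ring
  have hss : 0 ≤ ip (∑ i : Fin 6, a i • Rray i) (∑ i : Fin 6, a i • Rray i) := by
    rw [ip_sum_left]
    refine Finset.sum_nonneg fun i _ => ?_
    rw [ip_smul_left, ip_sum_right]
    refine mul_nonneg (ha i) (Finset.sum_nonneg fun j _ => ?_)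
    rw [ip_smul_right]
    exact mul_nonneg (ha j) (hRR i j)
  have expand : ip (vcl + ∑ i : Fin 6, a i • Rray i) (vcl + ∑ i : Fin 6, a i • Rray i)
      = 4 * (∑ i : Fin 6, a i)
        + ip (∑ i : Fin 6, a i • Rray i) (∑ i : Fin 6, a i • Rray i) := by
    rw [ip_add_right, ip_add_left, ip_add_left, hvv, hvs,
      ip_comm (∑ i : Fin 6, a i • Rray i) vcl, hvs]
    ring
  constructor
  · intro h
    have hsum : 0 ≤ ∑ i : Fin 6, a i := Finset.sum_nonneg fun i _ => ha i
    have hsum0 : ∑ i : Fin 6, a i = 0 := by nlinarith [expand, h, hss]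
    intro i
    exact (Finset.sum_eq_zero_iff_of_nonneg (fun j _ => ha j)).mp hsum0 i
      (Finset.mem_univ i)
  · intro h
    have h0 : ∑ i : Fin 6, a i • Rray i = 0 :=
      Finset.sum_eq_zero fun i _ => by rw [h i, zero_smul]
    rw [h0, add_zero, hvv]
end
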